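/- Consider a jointly-convex GNEP in which player ν solves min_{x^ν} θ_ν(x) s.t. g(x) ≤ 0 and h(x) ≤ 0, where g : ℝ^n → ℝ^m and h : ℝ^n → ℝ^p have convex continuously differentiable components. Let (x^k) be generated by the variational-equilibrium augmented Lagrangian method (Algorithm 5.1) under Assumption 5.1 with (ε_k) bounded and ε'_k → 0, let x̄ be a limit point of (x^k), and assume that h satisfies the classical CPLD condition at x̄. Then x̄ is a global solution of the convex optimization problem min_x ‖g_+(x)‖² s.t. h(x) ≤ 0; in particular, if the GNEP has feasible points, then x̄ is feasible. -/

import Mathlib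

/-!
If the penalty parameters stay bounded, the test on the complementarity residual eventually
always succeeds, the residual decays geometrically and `x̄` is even feasible for `g`.
Otherwise `ρ_k → ∞`. Dividing the approximate stationarity condition by `ρ_k`, the scaled
multipliers `λ^{k+1}/ρ_k` tend to `g₊(x̄)` and those of the inactive constraints of `h` vanish,
so `-∑ g₊(x̄)ᵢ ∇gᵢ(x̄)` is a limit of nonnegative combinations of active gradients `∇hⱼ(x^{k+1})`.
Carathéodory's theorem for cones makes these combinations linearly independent; unbounded
coefficients would then normalise to a positive linear dependence at `x̄`, which CPLD propagates
to nearby points, a contradiction. Hence `x̄` is a KKT point of `min ‖g₊‖²` subject to `h ≤ 0`,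
and by convexity of `g` and `h` together with Cauchy–Schwarz it is a global minimizer.
-/

open Filter Topology Finset Function RealInnerProductSpace

/-- The strategy space of a GNEP: one Euclidean block per player. -/
abbrev Strat {N : ℕ} (n : Fin N → ℕ) := (ν : Fin N) → EuclideanSpace ℝ (Fin (n ν))

/-- Partial gradient of `f : Strat n → ℝ` with respect to player `ν`'s block at `x`. -/
noncomputable def pgrad {N : ℕ} {n : Fin N → ℕ} (ν : Fin N)
    (f : Strat n → ℝ) (x : Strat n) : EuclideanSpace ℝ (Fin (n ν)) :=
  gradient (fun z => f (Function.update x ν z)) (x ν)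

/-- Positive linear dependence of a family on a finite index set. -/
def PosLinDep {ι E : Type*} [AddCommGroup E] [Module ℝ E]
    (s : Finset ι) (v : ι → E) : Prop :=
  ∃ a : ι → ℝ, (∀ i, 0 ≤ a i) ∧ (∃ i ∈ s, a i ≠ 0) ∧ ∑ i ∈ s, a i • v i = 0

/-- Linear dependence of a family on a finite index set. -/
def LinDep {ι E : Type*} [AddCommGroup E] [Module ℝ E]
    (s : Finset ι) (v : ι → E) : Prop :=
  ∃ a : ι → ℝ, (∃ i ∈ s, a i ≠ 0) ∧ ∑ i ∈ s, a i • v i = 0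

/-- CPLD with respect to player `ν`. -/
def CPLDnu {N : ℕ} {n : Fin N → ℕ} {ι : Type*} (ν : Fin N)
    (c : ι → Strat n → ℝ) (x : Strat n) : Prop :=
  ∀ I : Finset ι, (∀ i ∈ I, c i x = 0) →
    PosLinDep I (fun i => pgrad ν (c i) x) →
    ∃ U ∈ 𝓝 x, ∀ y ∈ U, LinDep I (fun i => pgrad ν (c i) y)

/-- EMFCQ with respect to player `ν`. -/
def EMFCQnu {N : ℕ} {n : Fin N → ℕ} {ι : Type*} (ν : Fin N)
    (c : ι → Strat n → ℝ) (x : Strat n) : Prop :=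
  ∃ d : EuclideanSpace ℝ (Fin (n ν)), ∀ i, 0 ≤ c i x → inner (𝕜 := ℝ) (pgrad ν (c i) x) d < 0

section BlockGradient

variable {N : ℕ} {n : Fin N → ℕ}

-- `Strat n` carries the sup norm, not an inner product, so `gradient` does not apply to it.
noncomputable def blockGrad (f : Strat n → ℝ) (x : Strat n) : Strat n := fun ν => pgrad ν f x

theorem pgrad_eq_toDual_symm {f : Strat n → ℝ} {x : Strat n} (hf : DifferentiableAt ℝ f x)
    (ν : Fin N) :
    pgrad ν f x = (InnerProductSpace.toDual ℝ _).symm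
      ((fderiv ℝ f x).comp (ContinuousLinearMap.single ℝ _ ν)) := by
  have hf' : HasFDerivAt f (fderiv ℝ f x) (update x ν (x ν)) := by
    rw [update_eq_self]; exact hf.hasFDerivAt
  have hupd := hf'.comp (x ν) (hasFDerivAt_update (𝕜 := ℝ) x (x ν))
  change (InnerProductSpace.toDual ℝ _).symm (fderiv ℝ (f ∘ update x ν) (x ν)) = _
  rw [hupd.fderiv]
  congr 2
  ext v μ : 2
  rcases eq_or_ne μ ν with rfl | hμ <;> simp [*]

theorem inner_pgrad {f : Strat n → ℝ} {x : Strat n} (hf : DifferentiableAt ℝ f x) (ν : Fin N)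
    (v : EuclideanSpace ℝ (Fin (n ν))) :
    ⟪pgrad ν f x, v⟫ = fderiv ℝ f x (Pi.single ν v) := by
  simp [pgrad_eq_toDual_symm hf]

theorem sum_inner_blockGrad {f : Strat n → ℝ} {x : Strat n} (hf : DifferentiableAt ℝ f x)
    (v : Strat n) : ∑ ν, ⟪blockGrad f x ν, v ν⟫ = fderiv ℝ f x v := by
  simp only [blockGrad, inner_pgrad hf]
  exact ContinuousLinearMap.sum_comp_single ℝ _ (fderiv ℝ f x) v

theorem continuous_pgrad {f : Strat n → ℝ} (hf : ContDiff ℝ 1 f) (ν : Fin N) :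
    Continuous (pgrad ν f) := by
  simp only [funext fun x => pgrad_eq_toDual_symm (hf.differentiable one_ne_zero x) ν]
  exact (InnerProductSpace.toDual ℝ _).symm.continuous.comp
    ((hf.continuous_fderiv one_ne_zero).clm_comp continuous_const)

theorem continuous_blockGrad {f : Strat n → ℝ} (hf : ContDiff ℝ 1 f) :
    Continuous (blockGrad f) :=
  continuous_pi (continuous_pgrad hf)

end BlockGradient

theorem ConvexOn.fderiv_apply_sub_le {E : Type*} [NormedAddCommGroup E] [NormedSpace ℝ E]
    {f : E → ℝ} (hf : ConvexOn ℝ Set.univ f) {x : E} (hd : DifferentiableAt ℝ f x) (y : E) :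
    fderiv ℝ f x (y - x) ≤ f y - f x := by
  have hline : HasDerivAt (fun t : ℝ => x + t • (y - x)) (y - x) 0 := by
    simpa using ((hasDerivAt_id (0 : ℝ)).smul_const (y - x)).const_add x
  have hφ : HasDerivAt (fun t : ℝ => f (x + t • (y - x))) (fderiv ℝ f x (y - x)) 0 := by
    have hd' : HasFDerivAt f (fderiv ℝ f x) (x + (0 : ℝ) • (y - x)) := by
      simpa using hd.hasFDerivAt
    exact hd'.comp_hasDerivAt 0 hline
  have hconv : ConvexOn ℝ Set.univ (fun t : ℝ => f (x + t • (y - x))) := by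
    simpa [AffineMap.lineMap_apply_module', Function.comp_def, add_comm, sub_eq_add_neg]
      using hf.comp_affineMap (AffineMap.lineMap x y)
  simpa [slope_def_field] using
    hconv.le_slope_of_hasDerivAt (Set.mem_univ 0) (Set.mem_univ 1) zero_lt_one hφ

theorem sum_inner_blockGrad_le {N : ℕ} {n : Fin N → ℕ} {f : Strat n → ℝ} (hf : ContDiff ℝ 1 f)
    (hconv : ConvexOn ℝ Set.univ f) (x y : Strat n) :
    ∑ ν, ⟪blockGrad f x ν, y ν - x ν⟫ ≤ f y - f x := by
  have hd := hf.differentiable one_ne_zero x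
  exact (sum_inner_blockGrad hd (y - x)).trans_le (hconv.fderiv_apply_sub_le hd y)

theorem max_zero_mul_self (a : ℝ) : max a 0 * a = max a 0 ^ 2 := by
  rcases le_total a 0 with ha | ha <;> simp [ha, sq]

/-- The heart of the Cauchy–Schwarz argument: `‖a₊‖² = ⟪a₊, a⟫ ≤ ⟪a₊, b⟫ ≤ ⟪a₊, b₊⟫ ≤ ‖a₊‖ ‖b₊‖`. -/
theorem sum_sq_max_le_of_sum_mul_le {ι : Type*} [Fintype ι] {a b : ι → ℝ}
    (h : ∑ i, max (a i) 0 * a i ≤ ∑ i, max (a i) 0 * b i) :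
    ∑ i, max (a i) 0 ^ 2 ≤ ∑ i, max (b i) 0 ^ 2 := by
  have hα : ∑ i, max (a i) 0 ^ 2 ≤ ∑ i, max (a i) 0 * max (b i) 0 := by
    simp only [← max_zero_mul_self] at h ⊢
    exact h.trans (Finset.sum_le_sum fun i _ =>
      mul_le_mul_of_nonneg_left (le_max_left _ _) (le_max_right _ _))
  have hCS := Finset.sum_mul_sq_le_sq_mul_sq Finset.univ (fun i => max (a i) 0)
    (fun i => max (b i) 0)
  have hα0 : 0 ≤ ∑ i, max (a i) 0 ^ 2 := Finset.sum_nonneg fun i _ => sq_nonneg _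
  have hβ0 : 0 ≤ ∑ i, max (b i) 0 ^ 2 := Finset.sum_nonneg fun i _ => sq_nonneg _
  nlinarith

theorem sum_sq_max_le_of_kkt {N : ℕ} {n : Fin N → ℕ} {ι κ : Type*} [Fintype ι] [Fintype κ]
    {g : ι → Strat n → ℝ} {h : κ → Strat n → ℝ} (hg : ∀ i, ContDiff ℝ 1 (g i))
    (hgc : ∀ i, ConvexOn ℝ Set.univ (g i)) (hh : ∀ j, ContDiff ℝ 1 (h j))
    (hhc : ∀ j, ConvexOn ℝ Set.univ (h j)) {x₀ : Strat n} {c : κ → ℝ} (hc : 0 ≤ c)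
    (hcompl : ∀ j, c j * h j x₀ = 0)
    (hstat : ∑ i, max (g i x₀) 0 • blockGrad (g i) x₀ + ∑ j, c j • blockGrad (h j) x₀ = 0)
    {z : Strat n} (hz : ∀ j, h j z ≤ 0) :
    ∑ i, max (g i x₀) 0 ^ 2 ≤ ∑ i, max (g i z) 0 ^ 2 := by
  set D : (Strat n → ℝ) → ℝ := fun f => ∑ ν, ⟪blockGrad f x₀ ν, z ν - x₀ ν⟫
  have hD : ∑ i, max (g i x₀) 0 * D (g i) + ∑ j, c j * D (h j) = 0 := by
    have := congrArg (fun v : Strat n => ∑ ν, ⟪v ν, z ν - x₀ ν⟫) hstat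
    simp only [Pi.add_apply, Finset.sum_apply, Pi.smul_apply, Pi.zero_apply, inner_add_left,
      sum_inner, real_inner_smul_left, inner_zero_left, Finset.sum_const_zero,
      Finset.sum_add_distrib] at this
    rw [Finset.sum_comm, Finset.sum_comm (s := Finset.univ (α := Fin N))] at this
    simpa only [D, Finset.mul_sum] using this
  have hDh : ∑ j, c j * D (h j) ≤ 0 := Finset.sum_nonpos fun j _ => by
    have := mul_le_mul_of_nonneg_left (sum_inner_blockGrad_le (hh j) (hhc j) x₀ z) (hc j)
    nlinarith [hcompl j, mul_nonpos_of_nonneg_of_nonpos (hc j) (hz j)]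
  have hDg : ∑ i, max (g i x₀) 0 * D (g i) ≤ ∑ i, max (g i x₀) 0 * (g i z - g i x₀) :=
    Finset.sum_le_sum fun i _ => mul_le_mul_of_nonneg_left
      (sum_inner_blockGrad_le (hg i) (hgc i) x₀ z) (le_max_right _ _)
  apply sum_sq_max_le_of_sum_mul_le
  simp only [mul_sub, Finset.sum_sub_distrib] at hDg
  linarith

theorem nonpos_of_sum_sq_max_le {ι : Type*} [Fintype ι] {a b : ι → ℝ}
    (h : ∑ i, max (a i) 0 ^ 2 ≤ ∑ i, max (b i) 0 ^ 2) (hb : ∀ i, b i ≤ 0) (i : ι) : a i ≤ 0 := by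
  have hsum : ∑ i, max (a i) 0 ^ 2 = 0 :=
    le_antisymm (by simpa [max_eq_right (hb _)] using h)
      (Finset.sum_nonneg fun i _ => sq_nonneg _)
  have hi := (Finset.sum_eq_zero_iff_of_nonneg fun i _ => sq_nonneg (max (a i) 0)).1 hsum i
    (Finset.mem_univ i)
  simpa using hi

section ConicCombination

variable {ι E : Type*} [AddCommGroup E] [Module ℝ E]

theorem LinDep.exists_pos {s : Finset ι} {v : ι → E} (h : LinDep s v) :
    ∃ a : ι → ℝ, (∃ i ∈ s, 0 < a i) ∧ ∑ i ∈ s, a i • v i = 0 := by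
  obtain ⟨a, ⟨i, hi, hai⟩, hsum⟩ := h
  rcases hai.lt_or_gt with hneg | hpos
  · exact ⟨-a, ⟨i, hi, neg_pos.2 hneg⟩, by simp [neg_smul, hsum]⟩
  · exact ⟨a, ⟨i, hi, hpos⟩, hsum⟩

theorem exists_not_linDep_sum_smul_eq (v : ι → E) (s : Finset ι) {c : ι → ℝ}
    (hc : 0 ≤ c) :
    ∃ t ⊆ s, ¬ LinDep t v ∧ ∃ d : ι → ℝ, 0 ≤ d ∧ (∀ i ∉ t, d i = 0) ∧
      ∑ i ∈ t, d i • v i = ∑ i ∈ s, c i • v i := by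
  classical
  induction s using Finset.strongInduction generalizing c with
  | H s ih =>
  by_cases hdep : LinDep s v
  swap
  · refine ⟨s, subset_rfl, hdep, fun i => if i ∈ s then c i else 0, fun i => ?_, ?_, ?_⟩
    · show (0 : ℝ) ≤ if i ∈ s then c i else 0
      split_ifs
      exacts [hc i, le_rfl]
    · intro i hi; simp [hi]
    · exact Finset.sum_congr rfl fun i hi => by simp [hi]
  obtain ⟨a, hpos, hsum⟩ := hdep.exists_pos
  obtain ⟨i₀, hi₀, hmin⟩ := (s.filter (0 < a ·)).exists_min_image (fun i => c i / a i)
    (by simpa [Finset.filter_nonempty_iff] using hpos)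
  rw [Finset.mem_filter] at hi₀
  set r := c i₀ / a i₀
  have hr : 0 ≤ r := div_nonneg (hc i₀) hi₀.2.le
  have hle : ∀ i ∈ s, r * a i ≤ c i := by
    intro i hi
    rcases le_or_gt (a i) 0 with ha | ha
    · have hci : (0 : ℝ) ≤ c i := hc i
      linarith [mul_nonpos_of_nonneg_of_nonpos hr ha]
    · exact (le_div_iff₀ ha).1 (hmin i (Finset.mem_filter.2 ⟨hi, ha⟩))
  -- moving along the relation until the coefficient of `i₀` vanishes
  set c' : ι → ℝ := fun i => max (c i - r * a i) 0
  have hc'i₀ : c' i₀ = 0 := by simp [c', r, div_mul_cancel₀ _ hi₀.2.ne']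
  obtain ⟨t, hts, ht, d, hd, hdt, hdsum⟩ :=
    ih _ (Finset.erase_ssubset hi₀.1) (c := c') fun i => le_max_right _ _
  refine ⟨t, hts.trans (s.erase_subset i₀), ht, d, hd, hdt, ?_⟩
  calc ∑ i ∈ t, d i • v i = ∑ i ∈ s.erase i₀, c' i • v i := hdsum
    _ = ∑ i ∈ s, c' i • v i := Finset.sum_erase _ (by simp [hc'i₀])
    _ = ∑ i ∈ s, (c i - r * a i) • v i := Finset.sum_congr rfl fun i hi => by
        simp [c', max_eq_left (sub_nonneg.2 (hle i hi))]
    _ = ∑ i ∈ s, c i • v i := by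
        simp [sub_smul, mul_smul, Finset.sum_sub_distrib, ← Finset.smul_sum, hsum]

end ConicCombination

section CPLD

variable {X E ι : Type*} [TopologicalSpace X] [NormedAddCommGroup E] [NormedSpace ℝ E]
  [Finite ι] {G : ι → X → E} {x₀ : X} {y : ℕ → X}

theorem exists_sum_smul_eq_of_tendsto_of_not_linDep (hy : Tendsto y atTop (𝓝 x₀))
    (hG : ∀ i, ContinuousAt (G i) x₀) {t : Finset ι} {d : ℕ → ι → ℝ} (hd : ∀ k, 0 ≤ d k)
    (hdt : ∀ k, ∀ i ∉ t, d k i = 0) {w : E}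
    (hw : Tendsto (fun k => ∑ i ∈ t, d k i • G i (y k)) atTop (𝓝 w))
    (hind : ∀ k, ¬ LinDep t (G · (y k)))
    (hcpld : PosLinDep t (G · x₀) → ∃ U ∈ 𝓝 x₀, ∀ z ∈ U, LinDep t (G · z)) :
    ∃ d₀ : ι → ℝ, 0 ≤ d₀ ∧ w = ∑ i ∈ t, d₀ i • G i x₀ := by
  -- rescale into a compact set; the scale `σ` tends to `0` exactly when the coefficients blow up
  set σ : ℕ → ℝ := fun k => (1 + ∑ i ∈ t, d k i)⁻¹
  have hS : ∀ k, 0 ≤ ∑ i ∈ t, d k i := fun k => Finset.sum_nonneg fun i _ => hd k i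
  have hσ : ∀ k, 0 < σ k := fun k => inv_pos.2 (by linarith [hS k])
  have hnorm : ∀ k, ∑ i ∈ t, σ k * d k i + σ k = 1 := fun k => by
    rw [← Finset.mul_sum, ← mul_add_one, add_comm, mul_comm]
    exact mul_inv_cancel₀ (by linarith [hS k])
  have hmem : ∀ k, (σ k • d k, σ k) ∈ Set.Icc (0 : (ι → ℝ) × ℝ) 1 := by
    intro k
    have hdle : ∀ i, d k i ≤ ∑ j ∈ t, d k j := fun i => by
      by_cases hi : i ∈ t
      · exact Finset.single_le_sum (fun j _ => hd k j) hi
      · exact (hdt k i hi).trans_le (hS k)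
    have hnorm' : σ k * ∑ j ∈ t, d k j + σ k = 1 := by rw [Finset.mul_sum]; exact hnorm k
    refine ⟨⟨fun i => mul_nonneg (hσ k).le (hd k i), (hσ k).le⟩, ⟨fun i => ?_, ?_⟩⟩
    · show σ k * d k i ≤ 1
      nlinarith [hσ k, hdle i]
    · show σ k ≤ 1
      nlinarith [hσ k, hS k]
  obtain ⟨⟨e₀, σ₀⟩, hmem₀, φ, hφ, hlim⟩ := isCompact_Icc.tendsto_subseq hmem
  have he₀ : 0 ≤ e₀ := hmem₀.1.1
  have hσ₀ : (0 : ℝ) ≤ σ₀ := hmem₀.1.2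
  have he : ∀ i, Tendsto (fun k => σ (φ k) * d (φ k) i) atTop (𝓝 (e₀ i)) :=
    tendsto_pi_nhds.1 ((Prod.tendsto_iff _ _).1 hlim).1
  have hσlim : Tendsto (fun k => σ (φ k)) atTop (𝓝 σ₀) := ((Prod.tendsto_iff _ _).1 hlim).2
  have hyφ := hy.comp hφ.tendsto_atTop
  have hsum : ∑ i ∈ t, e₀ i + σ₀ = 1 := by
    refine tendsto_nhds_unique (f := fun k => ∑ i ∈ t, σ (φ k) * d (φ k) i + σ (φ k))
      ((tendsto_finsetSum t fun i _ => he i).add hσlim) ?_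
    simp only [hnorm, tendsto_const_nhds]
  have hsumG : ∑ i ∈ t, e₀ i • G i x₀ = σ₀ • w := by
    refine tendsto_nhds_unique (f := fun k => σ (φ k) • ∑ i ∈ t, d (φ k) i • G i (y (φ k)))
      ?_ (hσlim.smul (hw.comp hφ.tendsto_atTop))
    refine (tendsto_finsetSum t fun i _ =>
      (he i).smul ((hG i).tendsto.comp hyφ)).congr fun k => ?_
    simp [Finset.smul_sum, mul_smul]
  rcases hσ₀.eq_or_lt with hσ₀0 | hσ₀pos
  · -- the normalised coefficients degenerate to a positive dependence at `x₀`
    rw [← hσ₀0, add_zero] at hsum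
    rw [← hσ₀0, zero_smul] at hsumG
    obtain ⟨U, hU, hdep⟩ := hcpld
      ⟨e₀, he₀, Finset.exists_ne_zero_of_sum_ne_zero (by simp [hsum]), hsumG⟩
    obtain ⟨k, hk⟩ := (hyφ.eventually_mem hU).exists
    exact absurd (hdep _ hk) (hind _)
  · refine ⟨σ₀⁻¹ • e₀, smul_nonneg (inv_nonneg.2 hσ₀pos.le) he₀, ?_⟩
    simp [mul_smul, ← Finset.smul_sum, hsumG, inv_smul_smul₀ hσ₀pos.ne']

theorem exists_sum_smul_eq_of_tendsto_of_cpld (hy : Tendsto y atTop (𝓝 x₀))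
    (hG : ∀ i, ContinuousAt (G i) x₀) {s : Finset ι} {c : ℕ → ι → ℝ} (hc : ∀ k, 0 ≤ c k) {w : E}
    (hw : Tendsto (fun k => ∑ i ∈ s, c k i • G i (y k)) atTop (𝓝 w))
    (hcpld : ∀ t ⊆ s, PosLinDep t (G · x₀) → ∃ U ∈ 𝓝 x₀, ∀ z ∈ U, LinDep t (G · z)) :
    ∃ c₀ : ι → ℝ, 0 ≤ c₀ ∧ w = ∑ i ∈ s, c₀ i • G i x₀ := by
  classical
  choose t hts hind d hd hdt hdsum using
    fun k => exists_not_linDep_sum_smul_eq (G · (y k)) s (hc k)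
  obtain ⟨t₀, ht₀, hfreq⟩ := s.powerset.frequently_exists.1 <|
    Frequently.of_forall (f := atTop) (p := fun k => ∃ t' ∈ s.powerset, t k = t') fun k =>
      ⟨t k, Finset.mem_powerset.2 (hts k), rfl⟩
  obtain ⟨φ, hφ, hφt⟩ := extraction_of_frequently_atTop hfreq
  obtain ⟨c₀, hc₀, hwc₀⟩ := exists_sum_smul_eq_of_tendsto_of_not_linDep
    (hy.comp hφ.tendsto_atTop) hG (d := d ∘ φ) (fun k => hd _) (fun k => hφt k ▸ hdt (φ k))
    ((hw.comp hφ.tendsto_atTop).congr fun k => hφt k ▸ (hdsum (φ k)).symm)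
    (fun k => hφt k ▸ hind (φ k)) (hcpld t₀ (Finset.mem_powerset.1 ht₀))
  refine ⟨fun i => if i ∈ t₀ then c₀ i else 0, fun i => ?_, ?_⟩
  · show (0 : ℝ) ≤ if i ∈ t₀ then c₀ i else 0
    split_ifs
    exacts [hc₀ i, le_rfl]
  · rw [hwc₀, ← Finset.sum_subset (Finset.mem_powerset.1 ht₀) fun i _ hi => by simp [hi]]
    exact Finset.sum_congr rfl fun i hi => by simp [hi]

end CPLD

section PenaltyParameter

variable {ρ : ℕ → ℝ} {γ : ℝ}

theorem pos_of_succ_eq_or_eq_mul (hγ : 0 < γ) (h0 : 0 < ρ 0)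
    (hstep : ∀ k, ρ (k + 1) = ρ k ∨ ρ (k + 1) = γ * ρ k) (k : ℕ) : 0 < ρ k := by
  induction k with
  | zero => exact h0
  | succ k ih => rcases hstep k with h | h <;> rw [h] <;> positivity

theorem monotone_of_succ_eq_or_eq_mul (hγ : 1 ≤ γ) (hpos : ∀ k, 0 < ρ k)
    (hstep : ∀ k, ρ (k + 1) = ρ k ∨ ρ (k + 1) = γ * ρ k) : Monotone ρ :=
  monotone_nat_of_le_succ fun k => by
    rcases hstep k with h | h <;> rw [h]
    nlinarith [hpos k]

theorem tendsto_atTop_of_frequently_eq_mul (hγ : 1 < γ) (h0 : 0 < ρ 0) (hmono : Monotone ρ)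
    (hfreq : ∃ᶠ k in atTop, ρ (k + 1) = γ * ρ k) : Tendsto ρ atTop atTop := by
  by_contra hlim
  have hbdd : BddAbove (Set.range ρ) :=
    not_not.1 (mt (tendsto_atTop_atTop_of_monotone' hmono) hlim)
  have hL : (⨆ k, ρ k) / γ < ⨆ k, ρ k :=
    div_lt_self (h0.trans_le (le_ciSup hbdd 0)) hγ
  obtain ⟨k, hk, hρk⟩ := (hfreq.and_eventually
    ((tendsto_atTop_ciSup hmono hbdd).eventually_const_lt hL)).exists
  rw [div_lt_iff₀ (by linarith)] at hρk
  linarith [le_ciSup hbdd (k + 1)]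

theorem tendsto_zero_of_eventually_le_mul {r : ℕ → ℝ} {τ : ℝ} (hτ : τ < 1) (hr : ∀ k, 0 ≤ r k)
    (h : ∀ᶠ k in atTop, r (k + 1) ≤ τ * r k) : Tendsto r atTop (𝓝 0) :=
  (summable_of_ratio_norm_eventually_le hτ (by
    simpa only [Real.norm_of_nonneg (hr _)] using h)).tendsto_atTop_zero

theorem tendsto_zero_or_tendsto_atTop_of_update {r : ℕ → ℝ} {τ : ℝ} (hτ : τ < 1) (hγ : 1 < γ)
    (hr : ∀ k, 0 ≤ r k) (h0 : 0 < ρ 0)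
    (hupd : ∀ k, (r (k + 1) ≤ τ * r k → ρ (k + 1) = ρ k) ∧
      (¬ r (k + 1) ≤ τ * r k → ρ (k + 1) = γ * ρ k)) :
    Tendsto r atTop (𝓝 0) ∨ ((∀ k, 0 < ρ k) ∧ Tendsto ρ atTop atTop) := by
  have hstep : ∀ k, ρ (k + 1) = ρ k ∨ ρ (k + 1) = γ * ρ k := fun k =>
    (em _).imp (hupd k).1 (hupd k).2
  have hpos := pos_of_succ_eq_or_eq_mul (by linarith) h0 hstep
  by_cases hdecay : ∀ᶠ k in atTop, r (k + 1) ≤ τ * r k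
  · exact .inl (tendsto_zero_of_eventually_le_mul hτ hr hdecay)
  · exact .inr ⟨hpos, tendsto_atTop_of_frequently_eq_mul hγ h0
      (monotone_of_succ_eq_or_eq_mul hγ.le hpos hstep)
      ((not_eventually.1 hdecay).mono fun k hk => (hupd k).2 hk)⟩

end PenaltyParameter

theorem abs_le_sqrt_sum_sq {ι : Type*} [Fintype ι] (f : ι → ℝ) (i : ι) :
    |f i| ≤ √(∑ j, f j ^ 2) :=
  Real.abs_le_sqrt (Finset.single_le_sum (fun j _ => sq_nonneg (f j)) (Finset.mem_univ i))

theorem nonpos_of_tendsto_of_abs_min_le {X : Type*} [TopologicalSpace X] {c : X → ℝ} {x₀ : X}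
    (hc : ContinuousAt c x₀) {y : ℕ → X} (hy : Tendsto y atTop (𝓝 x₀)) {μ ε : ℕ → ℝ}
    (hε : Tendsto ε atTop (𝓝 0)) (h : ∀ k, |min (-c (y k)) (μ k)| ≤ ε k) : c x₀ ≤ 0 :=
  le_of_tendsto_of_tendsto' (hc.tendsto.comp hy) hε fun k => by
    show c (y k) ≤ ε k
    linarith [(abs_le.1 (h k)).1, min_le_left (-c (y k)) (μ k)]

theorem tendsto_zero_of_abs_min_le {c μ ε : ℕ → ℝ} {c₀ : ℝ} (hc : Tendsto c atTop (𝓝 c₀))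
    (hc₀ : c₀ < 0) (hε : Tendsto ε atTop (𝓝 0)) (h : ∀ k, |min (-c k) (μ k)| ≤ ε k) :
    Tendsto μ atTop (𝓝 0) := by
  have hgap : ∀ᶠ k in atTop, ε k < -c k :=
    ((hc.neg.sub hε).eventually_const_lt (by linarith : (0 : ℝ) < -c₀ - 0)).mono
      fun k hk => by linarith
  refine squeeze_zero_norm' ?_ hε
  filter_upwards [hgap] with k hk
  have hk' := h k
  rcases le_or_gt (μ k) (-c k) with hμ | hμ
  · rwa [min_eq_right hμ] at hk'
  · rw [min_eq_left hμ.le] at hk'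
    linarith [le_abs_self (-c k)]

theorem tendsto_max_add_mul_div_atTop {a z ρ : ℕ → ℝ} {b B z₀ : ℝ} (hb : ∀ k, b ≤ a k)
    (hB : ∀ k, a k ≤ B) (hz : Tendsto z atTop (𝓝 z₀)) (hρ0 : ∀ k, 0 < ρ k)
    (hρ : Tendsto ρ atTop atTop) :
    Tendsto (fun k => max (a k + ρ k * z k) 0 / ρ k) atTop (𝓝 (max z₀ 0)) := by
  have h : ∀ k, max (a k + ρ k * z k) 0 / ρ k = max (a k / ρ k + z k) 0 := fun k => by
    rw [← max_div_div_right (hρ0 k).le, zero_div, add_div, mul_div_cancel_left₀ _ (hρ0 k).ne']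
  simpa only [h, zero_add] using
    ((tendsto_bdd_div_atTop_nhds_zero (.of_forall hb) (.of_forall hB) hρ).add hz).max
      tendsto_const_nhds

theorem tendsto_sum_max_div_of_tendsto_sum {κ E : Type*} [Fintype κ]
    [NormedAddCommGroup E] [NormedSpace ℝ E] {v : ℕ → κ → E} {v₀ : κ → E}
    (hv : ∀ j, Tendsto (fun k => v k j) atTop (𝓝 (v₀ j))) {μ : ℕ → κ → ℝ} {ε ρ : ℕ → ℝ}
    (hε : Tendsto ε atTop (𝓝 0)) (hρ : Tendsto ρ atTop atTop) (hμ : ∀ k j, -ε k ≤ μ k j)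
    {A : Finset κ} (hA : ∀ j ∉ A, Tendsto (fun k => μ k j) atTop (𝓝 0)) {w : E}
    (hw : Tendsto (fun k => ∑ j, (μ k j / ρ k) • v k j) atTop (𝓝 w)) :
    Tendsto (fun k => ∑ j ∈ A, (max (μ k j) 0 / ρ k) • v k j) atTop (𝓝 w) := by
  classical
  set d : ℕ → κ → ℝ := fun k j => (if j ∈ A then max (μ k j) 0 else 0) - μ k j
  have hd : ∀ j, Tendsto (fun k => d k j) atTop (𝓝 0) := by
    intro j
    by_cases hj : j ∈ A
    · simp only [d, if_pos hj]
      refine squeeze_zero (g := fun k => max (ε k) 0) (fun k => sub_nonneg.2 (le_max_left _ _))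
        (fun k => ?_) (by simpa using hε.max (tendsto_const_nhds (x := (0 : ℝ))))
      rcases le_total (μ k j) 0 with h | h
      · rw [max_eq_right h]; linarith [hμ k j, le_max_left (ε k) 0]
      · rw [max_eq_left h, sub_self]; exact le_max_right _ _
    · simpa [d, hj] using (hA j hj).neg
  have hsplit : ∀ k, ∑ j ∈ A, (max (μ k j) 0 / ρ k) • v k j
      = ∑ j, (μ k j / ρ k) • v k j + ∑ j, (d k j / ρ k) • v k j := fun k => by
    rw [← Finset.sum_add_distrib]
    simp only [← add_smul, ← add_div, d, add_sub_cancel, ite_div, zero_div, ite_smul,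
      zero_smul]
    rw [Finset.sum_ite_mem, Finset.univ_inter]
  have hrest : Tendsto (fun k => ∑ j, (d k j / ρ k) • v k j) atTop (𝓝 0) := by
    simpa using tendsto_finsetSum Finset.univ fun j _ => ((hd j).div_atTop hρ).smul (hv j)
  simpa only [hsplit, add_zero] using hw.add hrest

theorem tendsto_sum_div_smul_blockGrad {N : ℕ} {n : Fin N → ℕ} {ι κ : Type*} [Fintype ι]
    [Fintype κ] {θ : Fin N → Strat n → ℝ} {g : ι → Strat n → ℝ} {h : κ → Strat n → ℝ}
    (hθ : ∀ ν, ContDiff ℝ 1 (θ ν)) (hg : ∀ i, ContDiff ℝ 1 (g i)) {x₀ : Strat n}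
    {y : ℕ → Strat n} (hy : Tendsto y atTop (𝓝 x₀)) {ρ : ℕ → ℝ} (hρ0 : ∀ k, 0 < ρ k)
    (hρ : Tendsto ρ atTop atTop) {u : ℕ → ι → ℝ} {B : ℝ} (hu : ∀ k i, u k i ∈ Set.Icc 0 B)
    {μ : ℕ → κ → ℝ} {M : ℝ}
    (hstat : ∀ k ν, ‖pgrad ν (θ ν) (y k)
      + ∑ i, max (u k i + ρ k * g i (y k)) 0 • pgrad ν (g i) (y k)
      + ∑ j, μ k j • pgrad ν (h j) (y k)‖ ≤ M) :
    Tendsto (fun k => ∑ j, (μ k j / ρ k) • blockGrad (h j) (y k)) atTop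
      (𝓝 (-∑ i, max (g i x₀) 0 • blockGrad (g i) x₀)) := by
  have hρinv : Tendsto (fun k => (ρ k)⁻¹) atTop (𝓝 0) := tendsto_inv_atTop_zero.comp hρ
  set F : Strat n → Strat n := fun z ν => pgrad ν (θ ν) z
  set V : ℕ → Strat n := fun k => F (y k)
    + ∑ i, max (u k i + ρ k * g i (y k)) 0 • blockGrad (g i) (y k)
    + ∑ j, μ k j • blockGrad (h j) (y k)
  have hV : Tendsto (fun k => (ρ k)⁻¹ • V k) atTop (𝓝 0) := by
    refine tendsto_pi_nhds.2 fun ν => squeeze_zero_norm (fun k => ?_)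
      (by simpa using hρinv.mul_const M)
    have hVk : ‖V k ν‖ ≤ M := by simpa [V, F, blockGrad, Finset.sum_apply] using hstat k ν
    rw [Pi.smul_apply, norm_smul, Real.norm_of_nonneg (inv_nonneg.2 (hρ0 k).le)]
    exact mul_le_mul_of_nonneg_left hVk (inv_nonneg.2 (hρ0 k).le)
  have hF : Tendsto (fun k => (ρ k)⁻¹ • F (y k)) atTop (𝓝 0) := by
    simpa using hρinv.smul
      (((continuous_pi fun ν => continuous_pgrad (hθ ν) ν).tendsto x₀).comp hy)
  have ha : ∀ i, Tendsto (fun k => max (u k i + ρ k * g i (y k)) 0 / ρ k) atTop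
      (𝓝 (max (g i x₀) 0)) := fun i =>
    tendsto_max_add_mul_div_atTop (fun k => (hu k i).1) (fun k => (hu k i).2)
      (((hg i).continuous.tendsto x₀).comp hy) hρ0 hρ
  have hsplit : ∀ k, ∑ j, (μ k j / ρ k) • blockGrad (h j) (y k) = (ρ k)⁻¹ • V k
      - (ρ k)⁻¹ • F (y k)
      - ∑ i, (max (u k i + ρ k * g i (y k)) 0 / ρ k) • blockGrad (g i) (y k) := fun k => by
    simp only [V, smul_add, Finset.smul_sum, smul_smul, div_eq_inv_mul]
    abel
  simpa [hsplit] using (hV.sub hF).sub (tendsto_finsetSum Finset.univ fun i _ =>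
    (ha i).smul (((continuous_blockGrad (hg i)).tendsto x₀).comp hy))

theorem exists_kkt_of_tendsto_penalty {N : ℕ} {n : Fin N → ℕ} {ι κ : Type*} [Fintype ι]
    [Fintype κ] {θ : Fin N → Strat n → ℝ} {g : ι → Strat n → ℝ} {h : κ → Strat n → ℝ}
    (hθ : ∀ ν, ContDiff ℝ 1 (θ ν)) (hg : ∀ i, ContDiff ℝ 1 (g i))
    (hh : ∀ j, ContDiff ℝ 1 (h j)) {x₀ : Strat n} {y : ℕ → Strat n}
    (hy : Tendsto y atTop (𝓝 x₀)) {ρ : ℕ → ℝ} (hρ0 : ∀ k, 0 < ρ k)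
    (hρ : Tendsto ρ atTop atTop) {u : ℕ → ι → ℝ} {B : ℝ} (hu : ∀ k i, u k i ∈ Set.Icc 0 B)
    {μ : ℕ → κ → ℝ} {ε : ℕ → ℝ} (hε : Tendsto ε atTop (𝓝 0))
    (hμ : ∀ k j, |min (-h j (y k)) (μ k j)| ≤ ε k) {M : ℝ}
    (hstat : ∀ k ν, ‖pgrad ν (θ ν) (y k)
      + ∑ i, max (u k i + ρ k * g i (y k)) 0 • pgrad ν (g i) (y k)
      + ∑ j, μ k j • pgrad ν (h j) (y k)‖ ≤ M)
    (hcpld : ∀ I : Finset κ, (∀ j ∈ I, h j x₀ = 0) → PosLinDep I (fun j => blockGrad (h j) x₀) →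
      ∃ U ∈ 𝓝 x₀, ∀ z ∈ U, LinDep I (fun j => blockGrad (h j) z)) :
    ∃ c : κ → ℝ, 0 ≤ c ∧ (∀ j, c j * h j x₀ = 0) ∧
      ∑ i, max (g i x₀) 0 • blockGrad (g i) x₀ + ∑ j, c j • blockGrad (h j) x₀ = 0 := by
  classical
  have hGh : ∀ j, Tendsto (fun k => blockGrad (h j) (y k)) atTop (𝓝 (blockGrad (h j) x₀)) :=
    fun j => ((continuous_blockGrad (hh j)).tendsto x₀).comp hy
  set w : Strat n := -∑ i, max (g i x₀) 0 • blockGrad (g i) x₀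
  have hw : Tendsto (fun k => ∑ j, (μ k j / ρ k) • blockGrad (h j) (y k)) atTop (𝓝 w) :=
    tendsto_sum_div_smul_blockGrad hθ hg hy hρ0 hρ hu hstat
  set A := Finset.univ.filter fun j => h j x₀ = 0
  have hfeas : ∀ j, h j x₀ ≤ 0 := fun j =>
    nonpos_of_tendsto_of_abs_min_le (hh j).continuous.continuousAt hy hε (hμ · j)
  have hwA := tendsto_sum_max_div_of_tendsto_sum hGh hε hρ
    (fun k j => by linarith [(abs_le.1 (hμ k j)).1, min_le_right (-h j (y k)) (μ k j)])
    (A := A) (fun j hj => tendsto_zero_of_abs_min_le (((hh j).continuous.tendsto x₀).comp hy)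
      ((hfeas j).lt_of_ne (by simpa [A] using hj)) hε (hμ · j)) hw
  obtain ⟨c, hc, hwc⟩ := exists_sum_smul_eq_of_tendsto_of_cpld hy
    (fun j => (continuous_blockGrad (hh j)).continuousAt)
    (fun k j => div_nonneg (le_max_right _ _) (hρ0 k).le) hwA
    fun I hIA => hcpld I fun j hj => (Finset.mem_filter.1 (hIA hj)).2
  refine ⟨fun j => if h j x₀ = 0 then c j else 0, fun j => ?_, fun j => ?_, ?_⟩
  · show (0 : ℝ) ≤ if h j x₀ = 0 then c j else 0
    split_ifs
    exacts [hc j, le_rfl]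
  · show (if h j x₀ = 0 then c j else 0) * h j x₀ = 0
    split_ifs with hj <;> simp [hj]
  · simp only [ite_smul, zero_smul, ← Finset.sum_filter]
    rw [← hwc]
    exact add_neg_cancel _

theorem stmt17_general {N : ℕ} {n : Fin N → ℕ} {m p : ℕ}
    (θ : Fin N → Strat n → ℝ)
    (g : Fin m → Strat n → ℝ)
    (h : Fin p → Strat n → ℝ)
    (hθ : ∀ ν, ContDiff ℝ 1 (θ ν))
    (hgC1 : ∀ i, ContDiff ℝ 1 (g i))
    (hgconv : ∀ i, ConvexOn ℝ Set.univ (g i))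
    (hhC1 : ∀ j, ContDiff ℝ 1 (h j))
    (hhconv : ∀ j, ConvexOn ℝ Set.univ (h j))
    (x : ℕ → Strat n)
    (lam : ℕ → Fin m → ℝ)
    (mu : ℕ → Fin p → ℝ)
    (u : ℕ → Fin m → ℝ)
    (rho : ℕ → ℝ)
    (umax τ γ : ℝ)
    (humax : 0 ≤ umax)
    (hτ : τ ∈ Set.Ioo (0:ℝ) 1)
    (hγ : 1 < γ)
    (hrho0 : 0 < rho 0)
    (hu0 : ∀ i, u 0 i ∈ Set.Icc 0 umax)
    (hlam : ∀ k i, lam (k+1) i = max (u k i + rho k * g i (x (k+1))) 0)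
    (hu : ∀ k i, u (k+1) i = min (lam (k+1) i) umax)
    (hrho : ∀ k,
      (Real.sqrt (∑ i, (min (-(g i (x (k+1)))) (lam (k+1) i)) ^ 2) ≤
          τ * Real.sqrt (∑ i, (min (-(g i (x k))) (lam k i)) ^ 2) →
        rho (k+1) = rho k) ∧
      (¬ (Real.sqrt (∑ i, (min (-(g i (x (k+1)))) (lam (k+1) i)) ^ 2) ≤
          τ * Real.sqrt (∑ i, (min (-(g i (x k))) (lam k i)) ^ 2)) →
        rho (k+1) = γ * rho k))
    (eps eps' : ℕ → ℝ)
    (heps' : Tendsto eps' atTop (𝓝 0))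
    (hA1 : ∀ k ν, ‖pgrad ν (θ ν) (x (k+1))
        + ∑ i, max (u k i + rho k * g i (x (k+1))) 0 • pgrad ν (g i) (x (k+1))
        + ∑ j, mu (k+1) j • pgrad ν (h j) (x (k+1))‖ ≤ eps k)
    (hA2 : ∀ k, Real.sqrt (∑ j, (min (-(h j (x (k+1)))) (mu (k+1) j)) ^ 2) ≤ eps' k)
    (hepsbd : ∃ M, ∀ k, eps k ≤ M)
    (xbar : Strat n)
    (hclus : MapClusterPt xbar atTop x)
    (hCPLD : ∀ I : Finset (Fin p), (∀ j ∈ I, h j xbar = 0) →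
      PosLinDep I (fun j => (fun ν => pgrad ν (h j) xbar : Strat n)) →
      ∃ U ∈ 𝓝 xbar, ∀ y ∈ U, LinDep I (fun j => (fun ν => pgrad ν (h j) y : Strat n))) :
    ((∀ j, h j xbar ≤ 0) ∧
      ∀ y : Strat n, (∀ j, h j y ≤ 0) →
        ∑ i, max (g i xbar) 0 ^ 2 ≤ ∑ i, max (g i y) 0 ^ 2) ∧
    ((∃ z : Strat n, (∀ i, g i z ≤ 0) ∧ ∀ j, h j z ≤ 0) → ∀ i, g i xbar ≤ 0) := by
  obtain ⟨M, hM⟩ := hepsbd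
  have hu_mem : ∀ k i, u k i ∈ Set.Icc 0 umax
    | 0, i => hu0 i
    | k + 1, i => by
      rw [hu, hlam]
      exact ⟨le_min (le_max_right _ _) humax, min_le_right _ _⟩
  have hclus' : MapClusterPt xbar atTop fun k => x (k + 1) := by
    rwa [MapClusterPt, ← Function.comp_def x, ← Filter.map_map, map_add_atTop_eq_nat]
  obtain ⟨φ, hφ, hy⟩ : ∃ φ : ℕ → ℕ, StrictMono φ ∧
      Tendsto (fun k => x (φ k + 1)) atTop (𝓝 xbar) := hclus'.tendsto_subseq
  have hmu : ∀ k j, |min (-h j (x (φ k + 1))) (mu (φ k + 1) j)| ≤ eps' (φ k) := fun k j =>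
    (abs_le_sqrt_sum_sq _ j).trans (hA2 (φ k))
  have hmin : ∀ z : Strat n, (∀ j, h j z ≤ 0) →
      ∑ i, max (g i xbar) 0 ^ 2 ≤ ∑ i, max (g i z) 0 ^ 2 := by
    intro z hz
    rcases tendsto_zero_or_tendsto_atTop_of_update hτ.2 hγ (fun k => Real.sqrt_nonneg _) hrho0
      (r := fun k => Real.sqrt (∑ i, (min (-(g i (x k))) (lam k i)) ^ 2)) hrho with hr | ⟨hρ0, hρ⟩
    · have hg : ∀ i, g i xbar ≤ 0 := fun i => nonpos_of_tendsto_of_abs_min_le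
        (hgC1 i).continuous.continuousAt hy (hr.comp ((tendsto_add_atTop_nat 1).comp
          hφ.tendsto_atTop)) fun k =>
          abs_le_sqrt_sum_sq (fun i => min (-(g i (x (φ k + 1)))) (lam (φ k + 1) i)) i
      simpa [max_eq_right (hg _)] using Finset.sum_nonneg fun i _ => sq_nonneg (max (g i z) 0)
    · obtain ⟨c, hc, hcompl, hstat⟩ := exists_kkt_of_tendsto_penalty hθ hgC1 hhC1 hy
        (fun k => hρ0 (φ k)) (hρ.comp hφ.tendsto_atTop) (fun k => hu_mem (φ k))
        (heps'.comp hφ.tendsto_atTop) hmu (fun k ν => (hA1 (φ k) ν).trans (hM _)) hCPLD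
      exact sum_sq_max_le_of_kkt hgC1 hgconv hhC1 hhconv hc hcompl hstat hz
  refine ⟨⟨fun j => ?_, hmin⟩, fun ⟨z, hzg, hzh⟩ => nonpos_of_sum_sq_max_le (hmin z hzh) hzg⟩
  exact nonpos_of_tendsto_of_abs_min_le (hhC1 j).continuous.continuousAt hy
    (heps'.comp hφ.tendsto_atTop) (hmu · j)

/-- **Theorem 5.2.** For the variational-equilibrium augmented Lagrangian
method applied to a jointly-convex GNEP, if `h` satisfies the classical CPLD at a limit point
`xbar`, then `xbar` globally minimizes `‖g₊‖²` over `{h ≤ 0}`; in particular, if feasible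
points exist, `xbar` is feasible. -/
theorem stmt17 {N : ℕ} {n : Fin N → ℕ} {m p : ℕ}
    (θ : Fin N → Strat n → ℝ)
    (g : Fin m → Strat n → ℝ)
    (h : Fin p → Strat n → ℝ)
    (hθ : ∀ ν, ContDiff ℝ 1 (θ ν))
    (hgC1 : ∀ i, ContDiff ℝ 1 (g i))
    (hgconv : ∀ i, ConvexOn ℝ Set.univ (g i))
    (hhC1 : ∀ j, ContDiff ℝ 1 (h j))
    (hhconv : ∀ j, ConvexOn ℝ Set.univ (h j))
    (x : ℕ → Strat n)
    (lam : ℕ → Fin m → ℝ)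
    (mu : ℕ → Fin p → ℝ)
    (u : ℕ → Fin m → ℝ)
    (rho : ℕ → ℝ)
    (umax τ γ : ℝ)
    (humax : 0 ≤ umax)
    (hτ : τ ∈ Set.Ioo (0:ℝ) 1)
    (hγ : 1 < γ)
    (hrho0 : 0 < rho 0)
    (hu0 : ∀ i, u 0 i ∈ Set.Icc 0 umax)
    (hlam : ∀ k i, lam (k+1) i = max (u k i + rho k * g i (x (k+1))) 0)
    (hu : ∀ k i, u (k+1) i = min (lam (k+1) i) umax)
    (hrho : ∀ k,
      (Real.sqrt (∑ i, (min (-(g i (x (k+1)))) (lam (k+1) i)) ^ 2) ≤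
          τ * Real.sqrt (∑ i, (min (-(g i (x k))) (lam k i)) ^ 2) →
        rho (k+1) = rho k) ∧
      (¬ (Real.sqrt (∑ i, (min (-(g i (x (k+1)))) (lam (k+1) i)) ^ 2) ≤
          τ * Real.sqrt (∑ i, (min (-(g i (x k))) (lam k i)) ^ 2)) →
        rho (k+1) = γ * rho k))
    (eps eps' : ℕ → ℝ)
    (heps0 : ∀ k, 0 ≤ eps k)
    (heps'0 : ∀ k, 0 ≤ eps' k)
    (heps' : Tendsto eps' atTop (𝓝 0))
    (hA1 : ∀ k ν, ‖pgrad ν (θ ν) (x (k+1))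
        + ∑ i, max (u k i + rho k * g i (x (k+1))) 0 • pgrad ν (g i) (x (k+1))
        + ∑ j, mu (k+1) j • pgrad ν (h j) (x (k+1))‖ ≤ eps k)
    (hA2 : ∀ k, Real.sqrt (∑ j, (min (-(h j (x (k+1)))) (mu (k+1) j)) ^ 2) ≤ eps' k)
    (hepsbd : ∃ M, ∀ k, eps k ≤ M)
    (xbar : Strat n)
    (hclus : MapClusterPt xbar atTop x)
    (hCPLD : ∀ I : Finset (Fin p), (∀ j ∈ I, h j xbar = 0) →
      PosLinDep I (fun j => (fun ν => pgrad ν (h j) xbar : Strat n)) →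
      ∃ U ∈ 𝓝 xbar, ∀ y ∈ U, LinDep I (fun j => (fun ν => pgrad ν (h j) y : Strat n))) :
    ((∀ j, h j xbar ≤ 0) ∧
      ∀ y : Strat n, (∀ j, h j y ≤ 0) →
        ∑ i, max (g i xbar) 0 ^ 2 ≤ ∑ i, max (g i y) 0 ^ 2) ∧
    ((∃ z : Strat n, (∀ i, g i z ≤ 0) ∧ ∀ j, h j z ≤ 0) → ∀ i, g i xbar ≤ 0) :=
  stmt17_general θ g h hθ hgC1 hgconv hhC1 hhconv x lam mu u rho umax τ γ humax hτ hγ hrho0 hu0 hlam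
    hu hrho eps eps' heps' hA1 hA2 hepsbd xbar hclus hCPLD
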